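/- arXiv:2601.01583 — 3 statements merged into one kernel-verified Lean document; each statement's English description precedes it below -/
import Mathlib

section
/- Let λ > 0, p₁, p₂ ∈ [0,1] with p₁ + p₂ ≤ 1. The function f(x) = λ e^{-λx} [p₁ - p₂ ln(1 - e^{-λx}) + ((1-p₁-p₂)/2)(ln(1 - e^{-λx}))²] is nonnegative on (0,∞) and ∫₀^∞ f(x) dx = 1. -/
/-! Substituting `u = 1 - e^{-λx}` turns the density into `λ e^{-λx} g(u)` with
`g u = p₁ - p₂ log u + ((1 - p₁ - p₂)/2) (log u)²`, which is nonnegative because `log u ≤ 0`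
on `(0, 1)`. It has the antiderivative `G u = u (1 - (1 - p₁) log u + ((1 - p₁ - p₂)/2) (log u)²)`,
continuous on `[0, 1]` since `u (log u)² = 4 (√u log √u)²`, with `G 0 = 0` and `G 1 = 1`;
so `x ↦ G (1 - e^{-λx})` is an antiderivative of the density rising from `0` to `1`. -/

open MeasureTheory Real Set Filter Topology

theorem continuousOn_mul_log_sq : ContinuousOn (fun u : ℝ => u * log u ^ 2) (Ici 0) := by
  have h : Continuous fun u : ℝ => 4 * (√u * log √u) ^ 2 := by fun_prop
  refine h.continuousOn.congr fun u (hu : 0 ≤ u) => ?_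
  simp only [log_sqrt hu, mul_pow, sq_sqrt hu]
  ring

theorem one_sub_exp_neg_mul_mem_Ioo {lam x : ℝ} (hlam : 0 < lam) (hx : 0 < x) :
    1 - exp (-lam * x) ∈ Ioo 0 1 := by
  have hlt : exp (-lam * x) < 1 := exp_lt_one_iff.2 (by nlinarith)
  exact ⟨by linarith, by linarith [exp_pos (-lam * x)]⟩

theorem integral_Ioi_exp_mul_comp_one_sub_exp {G g : ℝ → ℝ} {lam : ℝ} (hlam : 0 < lam)
    (hG : ContinuousOn G (Icc 0 1)) (hderiv : ∀ u ∈ Ioo 0 1, HasDerivAt G (g u) u)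
    (hg : ∀ u ∈ Ioo 0 1, 0 ≤ g u) :
    ∫ x in Ioi 0, lam * exp (-lam * x) * g (1 - exp (-lam * x)) = G 1 - G 0 := by
  set e : ℝ → ℝ := fun x => 1 - exp (-lam * x)
  have he_cont : Continuous e := by fun_prop
  have he_maps : MapsTo e (Ici 0) (Icc 0 1) := fun x (hx : 0 ≤ x) => by
    have hle : exp (-lam * x) ≤ 1 := exp_le_one_iff.2 (by nlinarith)
    exact ⟨by simp only [e]; linarith, by simp only [e]; linarith [exp_pos (-lam * x)]⟩
  have he_deriv (x : ℝ) : HasDerivAt e (lam * exp (-lam * x)) x := by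
    simpa [e, mul_comm] using ((hasDerivAt_id x).const_mul (-lam)).exp.const_sub 1
  have he_atTop : Tendsto e atTop (𝓝[Icc 0 1] 1) := by
    refine tendsto_nhdsWithin_iff.2 ⟨?_, (eventually_ge_atTop 0).mono fun x hx => he_maps hx⟩
    have hexp : Tendsto (fun x => exp (-lam * x)) atTop (𝓝 0) :=
      (tendsto_exp_neg_atTop_nhds_zero.comp (tendsto_id.const_mul_atTop hlam)).congr fun x => by
        simp [neg_mul]
    simpa [e] using hexp.const_sub 1
  have key := integral_Ioi_of_hasDerivAt_of_nonneg (g := G ∘ e) (l := G 1)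
    ((hG (e 0) (he_maps self_mem_Ici)).comp he_cont.continuousWithinAt he_maps)
    (fun x hx => ((hderiv _ (one_sub_exp_neg_mul_mem_Ioo hlam hx)).comp x (he_deriv x)).congr_deriv
      (mul_comm _ _))
    (fun x hx => mul_nonneg (by positivity) (hg _ (one_sub_exp_neg_mul_mem_Ioo hlam hx)))
    ((hG 1 ⟨zero_le_one, le_rfl⟩).tendsto.comp he_atTop)
  simpa [e] using key

/- Evaluated at `u = 1 - e^{-λx}`, these are the CDF and the density (w.r.t. `u`) of the
cubic lower record-based transmuted exponential distribution. -/
noncomputable def transmutedCDF (p₁ p₂ u : ℝ) : ℝ :=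
  u * (1 - (1 - p₁) * log u + (1 - p₁ - p₂) / 2 * log u ^ 2)

noncomputable def transmutedDensity (p₁ p₂ u : ℝ) : ℝ :=
  p₁ - p₂ * log u + (1 - p₁ - p₂) / 2 * log u ^ 2

theorem transmutedCDF_zero (p₁ p₂ : ℝ) : transmutedCDF p₁ p₂ 0 = 0 := by
  simp [transmutedCDF]

theorem transmutedCDF_one (p₁ p₂ : ℝ) : transmutedCDF p₁ p₂ 1 = 1 := by
  simp [transmutedCDF]

theorem continuousOn_transmutedCDF (p₁ p₂ : ℝ) : ContinuousOn (transmutedCDF p₁ p₂) (Ici 0) := by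
  have hsplit : transmutedCDF p₁ p₂ =
      fun u => u - (1 - p₁) * (u * log u) + (1 - p₁ - p₂) / 2 * (u * log u ^ 2) := by
    ext u; simp only [transmutedCDF]; ring
  rw [hsplit]
  exact (continuousOn_id.sub (continuousOn_const.mul continuous_mul_log.continuousOn)).add
    (continuousOn_const.mul continuousOn_mul_log_sq)

theorem hasDerivAt_transmutedCDF (p₁ p₂ : ℝ) {u : ℝ} (hu : u ≠ 0) :
    HasDerivAt (transmutedCDF p₁ p₂) (transmutedDensity p₁ p₂ u) u := by
  have hlog := hasDerivAt_log hu
  have h := (hasDerivAt_id' u).mul (((hlog.const_mul (1 - p₁)).const_sub 1).add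
    ((hlog.pow 2).const_mul ((1 - p₁ - p₂) / 2)))
  refine h.congr_deriv ?_
  simp only [transmutedDensity, Pi.add_apply, Pi.pow_apply]
  field_simp
  ring

theorem transmutedDensity_nonneg {p₁ p₂ u : ℝ} (hp₁ : 0 ≤ p₁) (hp₂ : 0 ≤ p₂) (hsum : p₁ + p₂ ≤ 1)
    (hu₀ : 0 ≤ u) (hu₁ : u ≤ 1) : 0 ≤ transmutedDensity p₁ p₂ u := by
  have hlog : log u ≤ 0 := log_nonpos hu₀ hu₁
  have hlin : 0 ≤ p₂ * -log u := mul_nonneg hp₂ (neg_nonneg.2 hlog)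
  have hquad : 0 ≤ (1 - p₁ - p₂) / 2 * log u ^ 2 := mul_nonneg (by linarith) (sq_nonneg _)
  unfold transmutedDensity
  linarith

theorem stmt_10 (lam p₁ p₂ : ℝ) (hlam : 0 < lam)
    (hp₁ : p₁ ∈ Set.Icc (0:ℝ) 1) (hp₂ : p₂ ∈ Set.Icc (0:ℝ) 1) (hsum : p₁ + p₂ ≤ 1) :
    (∀ x ∈ Set.Ioi (0:ℝ),
      0 ≤ lam * Real.exp (-lam * x) *
        (p₁ - p₂ * Real.log (1 - Real.exp (-lam * x)) +
          ((1 - p₁ - p₂) / 2) * (Real.log (1 - Real.exp (-lam * x))) ^ 2)) ∧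
    ∫ x in Set.Ioi (0:ℝ),
        lam * Real.exp (-lam * x) *
          (p₁ - p₂ * Real.log (1 - Real.exp (-lam * x)) +
            ((1 - p₁ - p₂) / 2) * (Real.log (1 - Real.exp (-lam * x))) ^ 2) = 1 := by
  have hdensity_nonneg : ∀ u ∈ Ioo (0 : ℝ) 1, 0 ≤ transmutedDensity p₁ p₂ u :=
    fun u hu => transmutedDensity_nonneg hp₁.1 hp₂.1 hsum hu.1.le hu.2.le
  refine ⟨fun x hx => mul_nonneg (by positivity)
    (hdensity_nonneg _ (one_sub_exp_neg_mul_mem_Ioo hlam hx)), ?_⟩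
  have h := integral_Ioi_exp_mul_comp_one_sub_exp hlam
    ((continuousOn_transmutedCDF p₁ p₂).mono Icc_subset_Ici_self)
    (fun u hu => hasDerivAt_transmutedCDF p₁ p₂ hu.1.ne') hdensity_nonneg
  rwa [transmutedCDF_one, transmutedCDF_zero, sub_zero] at h
end

section
/- Let λ > 0, p₁, p₂ ∈ [0,1] with p₁+p₂ ≤ 1, and let F(x) = (1 - e^{-λx})[1 - (1-p₁) ln(1-e^{-λx}) + ((1-p₁-p₂)/2)(ln(1-e^{-λx}))²] for x > 0 with F(x)=0 for x ≤ 0. Then F is nondecreasing, lim_{x→∞} F(x) = 1, and 0 ≤ F(x) ≤ 1 for all x. -/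
/-!
Write `F x = G (1 - e^{-λx})` for `x > 0`, where `G u = clrbteTransform a b u = u (1 - a log u + b (log u)²)` with
`a = 1 - p₁` and `b = (1 - p₁ - p₂)/2`. On `(0, 1)` we have `G' u = (1 - a) + (2b - a) log u + b (log u)²`,
and each of the three terms is nonnegative because `log u ≤ 0`, `0 ≤ b` and `2b ≤ a ≤ 1`. So `G` is
nondecreasing on `(0, 1]` with `G 1 = 1`, while `1 - e^{-λx}` increases to `1`; this gives
monotonicity, the limit and the bound `F ≤ 1`.
-/

open Filter Real Set Topology

noncomputable def clrbteTransform (a b u : ℝ) : ℝ :=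
  u * (1 - a * log u + b * log u ^ 2)

section clrbteTransform

variable {a b : ℝ}

@[simp]
lemma clrbteTransform_one : clrbteTransform a b 1 = 1 := by
  simp [clrbteTransform]

lemma hasDerivAt_clrbteTransform {u : ℝ} (hu : u ≠ 0) :
    HasDerivAt (clrbteTransform a b) ((1 - a) + (2 * b - a) * log u + b * log u ^ 2) u := by
  have hlog := hasDerivAt_log hu
  have hfactor : HasDerivAt (fun v => 1 - a * log v + b * log v ^ 2)
      (0 - a * u⁻¹ + b * ((2 : ℕ) * log u ^ (2 - 1) * u⁻¹)) u :=
    ((hasDerivAt_const u (1 : ℝ)).sub (hlog.const_mul a)).add ((hlog.pow 2).const_mul b)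
  refine ((hasDerivAt_id u).mul hfactor).congr_deriv ?_
  simp only [id]
  field_simp
  ring

lemma continuousAt_clrbteTransform {u : ℝ} (hu : u ≠ 0) : ContinuousAt (clrbteTransform a b) u :=
  (hasDerivAt_clrbteTransform hu).continuousAt

lemma monotoneOn_clrbteTransform (hb : 0 ≤ b) (hab : 2 * b ≤ a) (ha : a ≤ 1) :
    MonotoneOn (clrbteTransform a b) (Ioc 0 1) := by
  refine monotoneOn_of_deriv_nonneg (convex_Ioc 0 1)
    (fun u hu => (continuousAt_clrbteTransform hu.1.ne').continuousWithinAt)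
    (fun u hu => (hasDerivAt_clrbteTransform (interior_subset hu).1.ne').differentiableAt
      |>.differentiableWithinAt) fun u hu => ?_
  rw [interior_Ioc] at hu
  rw [(hasDerivAt_clrbteTransform hu.1.ne').deriv]
  have hlog : log u ≤ 0 := log_nonpos hu.1.le hu.2.le
  have hmid : 0 ≤ (2 * b - a) * log u := mul_nonneg_of_nonpos_of_nonpos (by linarith) hlog
  positivity

lemma clrbteTransform_nonneg (hb : 0 ≤ b) (ha : 0 ≤ a) {u : ℝ} (hu : u ∈ Ioc 0 1) :
    0 ≤ clrbteTransform a b u := by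
  have hlog : a * log u ≤ 0 := mul_nonpos_of_nonneg_of_nonpos ha (log_nonpos hu.1.le hu.2)
  unfold clrbteTransform
  have : 0 ≤ 1 - a * log u := by linarith
  exact mul_nonneg hu.1.le (by positivity)

end clrbteTransform

section expCDF

variable {lam : ℝ}

lemma one_sub_exp_neg_mul_mem_Ioc (hlam : 0 < lam) {x : ℝ} (hx : 0 < x) :
    1 - exp (-lam * x) ∈ Ioc 0 1 := by
  have hlt : exp (-lam * x) < 1 := exp_lt_one_iff.mpr (by nlinarith)
  exact ⟨by linarith, by linarith [exp_pos (-lam * x)]⟩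

lemma monotone_one_sub_exp_neg_mul (hlam : 0 ≤ lam) :
    Monotone fun x => 1 - exp (-lam * x) := fun x y hxy => by
  have : exp (-lam * y) ≤ exp (-lam * x) := exp_le_exp.mpr (by nlinarith)
  linarith

lemma tendsto_one_sub_exp_neg_mul_atTop (hlam : 0 < lam) :
    Tendsto (fun x => 1 - exp (-lam * x)) atTop (𝓝 1) := by
  have hexp : Tendsto (fun x => exp (-lam * x)) atTop (𝓝 0) :=
    tendsto_exp_atBot.comp <| (tendsto_const_mul_atBot_of_neg (by linarith)).mpr tendsto_id
  simpa using hexp.const_sub 1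

end expCDF

lemma cdf_of_comp {G φ F : ℝ → ℝ} (hGmono : MonotoneOn G (Ioc 0 1))
    (hGnonneg : ∀ u ∈ Ioc 0 1, 0 ≤ G u) (hG1 : G 1 = 1) (hGcont : ContinuousAt G 1)
    (hφmono : Monotone φ) (hφmem : ∀ x, 0 < x → φ x ∈ Ioc 0 1)
    (hφlim : Tendsto φ atTop (𝓝 1))
    (hFpos : ∀ x, 0 < x → F x = G (φ x)) (hFneg : ∀ x, x ≤ 0 → F x = 0) :
    Monotone F ∧ Tendsto F atTop (𝓝 1) ∧ ∀ x, F x ∈ Icc 0 1 := by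
  have hmem : ∀ x, F x ∈ Icc 0 1 := fun x => by
    rcases le_or_gt x 0 with hx | hx
    · simp [hFneg x hx]
    · have hle := hGmono (hφmem x hx) ⟨one_pos, le_rfl⟩ (hφmem x hx).2
      rw [hFpos x hx]
      exact ⟨hGnonneg _ (hφmem x hx), hG1 ▸ hle⟩
  refine ⟨fun x y hxy => ?_, ?_, hmem⟩
  · rcases le_or_gt x 0 with hx | hx
    · exact hFneg x hx ▸ (hmem y).1
    · rw [hFpos x hx, hFpos y (hx.trans_le hxy)]
      exact hGmono (hφmem x hx) (hφmem y (hx.trans_le hxy)) (hφmono hxy)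
  · refine (hG1 ▸ hGcont.tendsto.comp hφlim).congr' ?_
    filter_upwards [eventually_gt_atTop 0] with x hx
    exact (hFpos x hx).symm

theorem stmt_11 (lam p₁ p₂ : ℝ) (hlam : 0 < lam)
    (hp₁ : p₁ ∈ Set.Icc (0:ℝ) 1) (hp₂ : p₂ ∈ Set.Icc (0:ℝ) 1) (hsum : p₁ + p₂ ≤ 1)
    (F : ℝ → ℝ)
    (hFpos : ∀ x : ℝ, 0 < x →
      F x = (1 - Real.exp (-lam * x)) *
        (1 - (1 - p₁) * Real.log (1 - Real.exp (-lam * x)) +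
          ((1 - p₁ - p₂) / 2) * (Real.log (1 - Real.exp (-lam * x))) ^ 2))
    (hFneg : ∀ x : ℝ, x ≤ 0 → F x = 0) :
    Monotone F ∧
    Tendsto F atTop (nhds 1) ∧
    ∀ x : ℝ, F x ∈ Set.Icc (0:ℝ) 1 := by
  have hb : 0 ≤ (1 - p₁ - p₂) / 2 := by linarith
  have hab : 2 * ((1 - p₁ - p₂) / 2) ≤ 1 - p₁ := by linarith [hp₂.1]
  exact cdf_of_comp (monotoneOn_clrbteTransform hb hab (by linarith [hp₁.1]))
    (fun u hu => clrbteTransform_nonneg hb (by linarith [hp₁.2]) hu) clrbteTransform_one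
    (continuousAt_clrbteTransform one_ne_zero) (monotone_one_sub_exp_neg_mul hlam.le)
    (fun x hx => one_sub_exp_neg_mul_mem_Ioc hlam hx) (tendsto_one_sub_exp_neg_mul_atTop hlam)
    hFpos hFneg
end

section
/- Let λ > 0, p₁, p₂ ∈ [0,1] with p₁+p₂ ≤ 1. The first moment of the CLRBTE(λ, p₁, p₂) distribution equals (1/λ) ∑_{k=1}^∞ (1/k)[p₁/(k+1) + p₂/(k+1)² + (1-p₁-p₂)/(k+1)³], i.e., ∫₀^∞ x f(x) dx equals this convergent series, where f is the CLRBTE PDF. -/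
/-!
Substituting `v = exp (-λ x)` and then `u = 1 - v` turns the first moment into
`(1/λ) ∫₀¹ -log (1 - u) (p₁ + p₂ (-log u) + (c/2) (-log u)²) du` with `c = 1 - p₁ - p₂`.
This is linear in `(p₁, p₂, c)`, and for each `(-log u)^j` the expansion
`-log (1 - u) = ∑ u^(k+1)/(k+1)` has nonnegative terms, so it may be integrated termwise using
`∫₀¹ u^m (-log u)^j du = j! / (m+1)^(j+1)`.
-/

open MeasureTheory Real Set
open scoped Nat

section Substitution

variable {E : Type*} [NormedAddCommGroup E] [NormedSpace ℝ E]

theorem setIntegral_Ioo_zero_one_eq_exp_neg_mul {lam : ℝ} (hlam : 0 < lam) (g : ℝ → E) :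
    ∫ u in Ioo 0 1, g u = ∫ x in Ioi 0, (lam * exp (-lam * x)) • g (exp (-lam * x)) := by
  have himage : (fun x => exp (-lam * x)) '' Ioi 0 = Ioo 0 1 := by
    ext u
    constructor
    · rintro ⟨x, hx, rfl⟩
      exact ⟨exp_pos _, exp_lt_one_iff.2 (by nlinarith [mem_Ioi.1 hx])⟩
    · rintro ⟨hu₀, hu₁⟩
      refine ⟨-log u / lam, div_pos (neg_pos.2 (log_neg hu₀ hu₁)) hlam, ?_⟩
      show exp (-lam * (-log u / lam)) = u
      rw [show -lam * (-log u / lam) = log u by field_simp, exp_log hu₀]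
  have hderiv : ∀ x ∈ Ioi (0 : ℝ),
      HasDerivWithinAt (fun x => exp (-lam * x)) (-lam * exp (-lam * x)) (Ioi 0) x := fun x _ => by
    simpa [mul_comm] using ((hasDerivAt_id x).const_mul (-lam)).exp.hasDerivWithinAt
  have hinj : InjOn (fun x => exp (-lam * x)) (Ioi 0) := fun x _ y _ h =>
    mul_left_cancel₀ (neg_ne_zero.2 hlam.ne') (exp_injective h)
  rw [← himage, integral_image_eq_integral_abs_deriv_smul measurableSet_Ioi hderiv hinj]
  refine setIntegral_congr_fun measurableSet_Ioi fun x _ => ?_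
  rw [neg_mul, abs_neg, abs_of_pos (by positivity)]

theorem setIntegral_Ioo_zero_one_comp_one_sub (g : ℝ → E) :
    ∫ u in Ioo 0 1, g (1 - u) = ∫ u in Ioo 0 1, g u := by
  have hderiv : ∀ u ∈ Ioo (0 : ℝ) 1, HasDerivWithinAt (fun u => 1 - u) (-1) (Ioo 0 1) u :=
    fun u _ => by simpa using ((hasDerivAt_id u).const_sub 1).hasDerivWithinAt
  have hinj : InjOn (fun u : ℝ => 1 - u) (Ioo 0 1) := fun u _ v _ h => sub_right_injective h
  have := integral_image_eq_integral_abs_deriv_smul measurableSet_Ioo hderiv hinj g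
  rw [image_const_sub_Ioo, sub_zero, sub_self] at this
  simpa using this.symm

end Substitution

theorem integral_pow_mul_neg_log_pow (m j : ℕ) :
    ∫ u in Ioo 0 1, u ^ m * (-log u) ^ j = (j ! : ℝ) / ((m : ℝ) + 1) ^ (j + 1) := by
  have hgamma := integral_rpow_mul_exp_neg_mul_Ioi (a := j + 1) (r := m + 1)
    (by positivity) (by positivity)
  simp only [add_sub_cancel_right, rpow_natCast] at hgamma
  rw [Gamma_nat_eq_factorial, ← Nat.cast_add_one j, rpow_natCast,
    div_pow, one_pow, one_div_mul_eq_div] at hgamma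
  rw [setIntegral_Ioo_zero_one_eq_exp_neg_mul one_pos, ← hgamma]
  refine setIntegral_congr_fun measurableSet_Ioi fun x _ => ?_
  rw [smul_eq_mul, log_exp, ← exp_nat_mul, one_mul, mul_left_comm, ← mul_assoc, ← exp_add]
  ring_nf

theorem integrableOn_pow_mul_neg_log_pow (m j : ℕ) :
    IntegrableOn (fun u => u ^ m * (-log u) ^ j) (Ioo 0 1) :=
  -- a non-integrable function has integral zero
  Integrable.of_integral_ne_zero <| by rw [integral_pow_mul_neg_log_pow]; positivity

theorem hasSum_integral_neg_log_one_sub_mul_neg_log_pow (j : ℕ) :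
    HasSum (fun k : ℕ => (j ! : ℝ) / (((k : ℝ) + 1) * ((k : ℝ) + 2) ^ (j + 1)))
      (∫ u in Ioo 0 1, -log (1 - u) * (-log u) ^ j) := by
  set F : ℕ → ℝ → ℝ := fun k u => u ^ (k + 1) * (-log u) ^ j / ((k : ℝ) + 1)
  have hF_integrable (k : ℕ) : IntegrableOn (F k) (Ioo 0 1) :=
    (integrableOn_pow_mul_neg_log_pow (k + 1) j).div_const ((k : ℝ) + 1)
  have hF_integral (k : ℕ) : ∫ u in Ioo 0 1, F k u
      = (j ! : ℝ) / (((k : ℝ) + 1) * ((k : ℝ) + 2) ^ (j + 1)) := by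
    simp only [F, integral_div, integral_pow_mul_neg_log_pow]
    push_cast
    field_simp
    ring
  have hF_norm (k : ℕ) : ∫ u in Ioo 0 1, ‖F k u‖ = ∫ u in Ioo 0 1, F k u := by
    refine setIntegral_congr_fun measurableSet_Ioo fun u ⟨hu₀, hu₁⟩ => norm_of_nonneg ?_
    have : 0 ≤ -log u := neg_nonneg.2 (log_nonpos hu₀.le hu₁.le)
    positivity
  have hsummable : Summable fun k : ℕ => (j ! : ℝ) / (((k : ℝ) + 1) * ((k : ℝ) + 2) ^ (j + 1)) := by
    have hbase : Summable fun k : ℕ => 1 / ((k : ℝ) + 1) ^ 2 := by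
      exact_mod_cast (summable_nat_add_iff 1).2 (Real.summable_one_div_nat_pow.2 one_lt_two)
    refine (hbase.mul_left (j ! : ℝ)).of_nonneg_of_le (fun k => by positivity) fun k => ?_
    rw [← div_eq_mul_one_div]
    gcongr
    rw [sq]
    gcongr
    calc (k : ℝ) + 1 ≤ (k : ℝ) + 2 := by linarith
      _ ≤ ((k : ℝ) + 2) ^ (j + 1) := le_self_pow₀ (by linarith) (by omega)
  have hsum := hasSum_integral_of_summable_integral_norm hF_integrable
    (hsummable.congr fun k => by rw [hF_norm, hF_integral])
  simp only [hF_integral] at hsum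
  have hexpand : ∫ u in Ioo 0 1, -log (1 - u) * (-log u) ^ j = ∫ u in Ioo 0 1, ∑' k, F k u := by
    refine setIntegral_congr_fun measurableSet_Ioo fun u ⟨hu₀, hu₁⟩ => ?_
    simp only [F, ← div_mul_eq_mul_div]
    exact ((hasSum_pow_div_log_of_abs_lt_one (abs_lt.2 ⟨by linarith, hu₁⟩)).mul_right _).tsum_eq.symm
  rwa [hexpand]

theorem integrableOn_neg_log_one_sub_mul_neg_log_pow (j : ℕ) :
    IntegrableOn (fun u => -log (1 - u) * (-log u) ^ j) (Ioo 0 1) :=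
  Integrable.of_integral_ne_zero <| ne_of_gt <|
    hasSum_lt (f := 0) (i := 0) (fun k => by positivity) (by positivity) hasSum_zero
      (hasSum_integral_neg_log_one_sub_mul_neg_log_pow j)

theorem setIntegral_Ioi_mul_comp_one_sub_exp_neg_mul {lam : ℝ} (hlam : 0 < lam) (h : ℝ → ℝ) :
    ∫ x in Ioi 0, x * (lam * exp (-lam * x) * h (1 - exp (-lam * x)))
      = lam⁻¹ * ∫ u in Ioo 0 1, -log (1 - u) * h u := by
  set G : ℝ → ℝ := fun v => lam⁻¹ * (-log v * h (1 - v))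
  calc _ = ∫ x in Ioi 0, (lam * exp (-lam * x)) • G (exp (-lam * x)) := by
        refine setIntegral_congr_fun measurableSet_Ioi fun x _ => ?_
        simp only [G, smul_eq_mul, log_exp]
        field_simp
    _ = ∫ u in Ioo 0 1, G (1 - u) := by
      rw [← setIntegral_Ioo_zero_one_eq_exp_neg_mul hlam, setIntegral_Ioo_zero_one_comp_one_sub]
    _ = lam⁻¹ * ∫ u in Ioo 0 1, -log (1 - u) * h u := by
      simp only [G, sub_sub_cancel, integral_const_mul]

theorem hasSum_integral_neg_log_one_sub_mul_quadratic_log (a b c : ℝ) :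
    HasSum (fun k : ℕ => 1 / ((k : ℝ) + 1) *
        (a / ((k : ℝ) + 2) + b / ((k : ℝ) + 2) ^ 2 + c / ((k : ℝ) + 2) ^ 3))
      (∫ u in Ioo 0 1, -log (1 - u) * (a - b * log u + c / 2 * log u ^ 2)) := by
  set A : ℕ → ℝ → ℝ := fun j u => -log (1 - u) * (-log u) ^ j
  have hA (j : ℕ) : IntegrableOn (A j) (Ioo 0 1) := integrableOn_neg_log_one_sub_mul_neg_log_pow j
  have hlinear : ∫ u in Ioo 0 1, -log (1 - u) * (a - b * log u + c / 2 * log u ^ 2)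
      = a * (∫ u in Ioo 0 1, A 0 u) + b * (∫ u in Ioo 0 1, A 1 u)
        + c / 2 * ∫ u in Ioo 0 1, A 2 u := by
    rw [← integral_const_mul, ← integral_const_mul, ← integral_const_mul,
      ← integral_add ((hA 0).const_mul _) ((hA 1).const_mul _),
      ← integral_add (f := fun u => a * A 0 u + b * A 1 u)
        (((hA 0).const_mul _).add ((hA 1).const_mul _)) ((hA 2).const_mul _)]
    refine setIntegral_congr_fun measurableSet_Ioo fun u _ => ?_
    simp only [A]
    ring
  rw [hlinear]
  refine ((((hasSum_integral_neg_log_one_sub_mul_neg_log_pow 0).mul_left a).add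
    ((hasSum_integral_neg_log_one_sub_mul_neg_log_pow 1).mul_left b)).add
    ((hasSum_integral_neg_log_one_sub_mul_neg_log_pow 2).mul_left (c / 2))).congr_fun fun k => ?_
  simp only [Nat.factorial]
  push_cast
  field_simp

theorem stmt_14_general (lam p₁ p₂ : ℝ) (hlam : 0 < lam) :
    Summable (fun k : ℕ =>
      (1 / ((k : ℝ) + 1)) *
        (p₁ / ((k : ℝ) + 2) + p₂ / ((k : ℝ) + 2) ^ 2 + (1 - p₁ - p₂) / ((k : ℝ) + 2) ^ 3)) ∧
    ∫ x in Set.Ioi (0:ℝ),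
        x * (lam * Real.exp (-lam * x) *
          (p₁ - p₂ * Real.log (1 - Real.exp (-lam * x)) +
            ((1 - p₁ - p₂) / 2) * (Real.log (1 - Real.exp (-lam * x))) ^ 2))
      = (1 / lam) * ∑' k : ℕ,
          (1 / ((k : ℝ) + 1)) *
            (p₁ / ((k : ℝ) + 2) + p₂ / ((k : ℝ) + 2) ^ 2 +
              (1 - p₁ - p₂) / ((k : ℝ) + 2) ^ 3) := by
  have hseries := hasSum_integral_neg_log_one_sub_mul_quadratic_log p₁ p₂ (1 - p₁ - p₂)
  refine ⟨hseries.summable, ?_⟩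
  rw [setIntegral_Ioi_mul_comp_one_sub_exp_neg_mul hlam
    fun u => p₁ - p₂ * log u + (1 - p₁ - p₂) / 2 * log u ^ 2, hseries.tsum_eq, one_div]

theorem stmt_14 (lam p₁ p₂ : ℝ) (hlam : 0 < lam)
    (hp₁ : p₁ ∈ Set.Icc (0:ℝ) 1) (hp₂ : p₂ ∈ Set.Icc (0:ℝ) 1) (hsum : p₁ + p₂ ≤ 1) :
    Summable (fun k : ℕ =>
      (1 / ((k : ℝ) + 1)) *
        (p₁ / ((k : ℝ) + 2) + p₂ / ((k : ℝ) + 2) ^ 2 + (1 - p₁ - p₂) / ((k : ℝ) + 2) ^ 3)) ∧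
    ∫ x in Set.Ioi (0:ℝ),
        x * (lam * Real.exp (-lam * x) *
          (p₁ - p₂ * Real.log (1 - Real.exp (-lam * x)) +
            ((1 - p₁ - p₂) / 2) * (Real.log (1 - Real.exp (-lam * x))) ^ 2))
      = (1 / lam) * ∑' k : ℕ,
          (1 / ((k : ℝ) + 1)) *
            (p₁ / ((k : ℝ) + 2) + p₂ / ((k : ℝ) + 2) ^ 2 +
              (1 - p₁ - p₂) / ((k : ℝ) + 2) ^ 3) :=
  stmt_14_general lam p₁ p₂ hlam
end
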